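/- If G has Seidel spectrum {σ_1,...,σ_n}, then D_m^*(D_m(G)) has Seidel spectrum {m²σ_i + (m-1)² : i = 1,...,n} together with the eigenvalue 1-2m with multiplicity mn - n and the eigenvalue 1 with multiplicity m²n - mn. -/

import Mathlib

open Matrix Kronecker BigOperators Finset

/-- The all-ones matrix. -/
noncomputable def allOnes (k : Type*) [Fintype k] : Matrix k k ℝ :=
  Matrix.of fun _ _ => 1

/-- The Seidel matrix formed from an adjacency matrix `M`: `S(M) = J - I - 2M`. -/
noncomputable def seidelOf {k : Type*} [Fintype k] [DecidableEq k]
    (M : Matrix k k ℝ) : Matrix k k ℝ :=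
  allOnes k - 1 - 2 • M

/-- The (complex) multiset of eigenvalues of a real matrix: roots of its
characteristic polynomial over `ℂ`. -/
noncomputable def specC {k : Type*} [Fintype k] [DecidableEq k]
    (M : Matrix k k ℝ) : Multiset ℂ :=
  ((M.map (Complex.ofReal)).charpoly).roots

/-- The energy of a real matrix: the sum of absolute values of its eigenvalues. -/
noncomputable def energy {k : Type*} [Fintype k] [DecidableEq k]
    (M : Matrix k k ℝ) : ℝ :=
  ((specC M).map (fun z : ℂ => ‖z‖)).sum

/-!
Conjugating by `U ⊗ V`, where the orthogonal matrices `U` and `V` diagonalise `J_m` and a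
symmetric `S`, diagonalises `J_m ⊗ (S + a) + c`. As `J_m` has spectrum `{m, 0^(m-1)}`, this
matrix has spectrum `{m (σ + a) + c}` together with `c` of multiplicity `(m - 1)·|S|`.
The Seidel matrices of `D_m(H)` and `D_m^*(H)` are `J_m ⊗ (S_H + 1) - 1` and
`J_m ⊗ (S_H - 1) + 1`, so two applications give the spectrum of `D_m^*(D_m(G))`.
-/

open Polynomial

lemma Matrix.IsHermitian.kronecker {k l α : Type*} [CommSemiring α] [StarRing α]
    {A : Matrix k k α} {B : Matrix l l α} (hA : A.IsHermitian) (hB : B.IsHermitian) :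
    (A ⊗ₖ B).IsHermitian := by
  rw [IsHermitian, conjTranspose_kronecker, hA.eq, hB.eq]

lemma diagonal_kronecker_add_smul_one {k l α : Type*} [DecidableEq k] [DecidableEq l]
    [CommSemiring α] (e : k → α) (d : l → α) (a c : α) :
    diagonal e ⊗ₖ (diagonal d + a • 1) + c • 1 =
      diagonal fun p : k × l => e p.1 * (d p.2 + a) + c := by
  ext ⟨i, j⟩ ⟨i', j'⟩
  by_cases hi : i = i' <;> by_cases hj : j = j' <;> simp [one_apply, hi, hj]

lemma conjStarAlgAut_kronecker {k l R : Type*} [Fintype k] [Fintype l] [DecidableEq k]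
    [DecidableEq l] [CommRing R] [StarRing R] (U : unitary (Matrix k k R))
    (W : unitary (Matrix l l R)) (A : Matrix k k R) (B : Matrix l l R) :
    Unitary.conjStarAlgAut R _
        (⟨U ⊗ₖ W, kronecker_mem_unitary U.2 W.2⟩ : unitary (Matrix (k × l) (k × l) R))
        (A ⊗ₖ B) =
      Unitary.conjStarAlgAut R _ U A ⊗ₖ Unitary.conjStarAlgAut R _ W B := by
  simp only [Unitary.conjStarAlgAut_apply, star_eq_conjTranspose, conjTranspose_kronecker,
    mul_kronecker_mul]

section

variable {k l : Type*} [Fintype k] [Fintype l]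

lemma Finset.univ_val_map_prod_eq_bind {α β γ : Type*} (f : k → α) (g : l → β)
    (h : α → β → γ) :
    (univ : Finset (k × l)).val.map (fun p => h (f p.1) (g p.2)) =
      (univ.val.map f).bind fun x => (univ.val.map g).map (h x) := by
  rw [← Finset.univ_product_univ, Finset.product_val]
  simp [SProd.sprod, Multiset.product, Multiset.map_bind, Multiset.bind_map, Multiset.map_map]

lemma allOnes_eq_vecMulVec : allOnes k = vecMulVec 1 1 := by
  ext
  simp [allOnes, vecMulVec]

lemma isHermitian_allOnes : (allOnes k).IsHermitian := by
  ext
  simp [allOnes]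

variable [DecidableEq k] [DecidableEq l]

lemma specC_eq_roots_map_charpoly (M : Matrix k k ℝ) :
    specC M = (M.charpoly.map Complex.ofRealHom).roots := by
  rw [specC, ← charpoly_map]
  rfl

lemma specC_diagonal (d : k → ℝ) : specC (diagonal d) = univ.val.map fun i => (d i : ℂ) := by
  rw [specC_eq_roots_map_charpoly, charpoly_diagonal, Polynomial.map_prod,
    Finset.prod_eq_multiset_prod]
  simpa [Multiset.map_map, Function.comp_def] using
    roots_multiset_prod_X_sub_C (univ.val.map fun i => (d i : ℂ))

lemma specC_conjStarAlgAut (U : unitary (Matrix k k ℝ)) (M : Matrix k k ℝ) :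
    specC (Unitary.conjStarAlgAut ℝ _ U M) = specC M := by
  rw [specC_eq_roots_map_charpoly, specC_eq_roots_map_charpoly, Unitary.conjStarAlgAut_apply,
    charpoly_mul_comm, ← mul_assoc, Unitary.coe_star_mul_self, one_mul]

lemma Matrix.IsHermitian.conjStarAlgAut_diagonal_eigenvalues {A : Matrix k k ℝ}
    (hA : A.IsHermitian) :
    Unitary.conjStarAlgAut ℝ _ hA.eigenvectorUnitary (diagonal hA.eigenvalues) = A := by
  simpa using hA.spectral_theorem.symm

lemma Matrix.IsHermitian.specC_eq_eigenvalues {A : Matrix k k ℝ} (hA : A.IsHermitian) :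
    specC A = univ.val.map fun i => (hA.eigenvalues i : ℂ) := by
  conv_lhs => rw [← hA.conjStarAlgAut_diagonal_eigenvalues]
  rw [specC_conjStarAlgAut, specC_diagonal]

lemma specC_vecMulVec [Nonempty k] (u v : k → ℝ) :
    specC (vecMulVec u v) =
      ((u ⬝ᵥ v : ℝ) : ℂ) ::ₘ Multiset.replicate (Fintype.card k - 1) 0 := by
  have hcharpoly : (vecMulVec u v).charpoly = X ^ (Fintype.card k - 1) * (X - C (u ⬝ᵥ v)) := by
    rw [charpoly_vecMulVec, mul_sub, ← pow_succ, Nat.sub_add_cancel Fintype.card_pos,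
      smul_eq_C_mul, mul_comm]
  rw [specC_eq_roots_map_charpoly, hcharpoly, Polynomial.map_mul,
    roots_mul (by simp [X_sub_C_ne_zero])]
  simp only [Polynomial.map_pow, map_X, Polynomial.map_sub, map_C, roots_pow, roots_X,
    roots_X_sub_C, Multiset.nsmul_singleton]
  rw [add_comm, Multiset.singleton_add]
  rfl

lemma specC_allOnes [Nonempty k] :
    specC (allOnes k) = (Fintype.card k : ℂ) ::ₘ Multiset.replicate (Fintype.card k - 1) 0 := by
  rw [allOnes_eq_vecMulVec, specC_vecMulVec]
  simp

lemma specC_allOnes_kronecker_add_smul_one [Nonempty k] {S : Matrix l l ℝ} (hS : S.IsHermitian)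
    (a c : ℝ) :
    specC (allOnes k ⊗ₖ (S + a • 1) + c • 1) =
      (specC S).map (fun σ => (Fintype.card k : ℂ) * (σ + a) + c) +
        Multiset.replicate ((Fintype.card k - 1) * Fintype.card l) (c : ℂ) := by
  have hJ := isHermitian_allOnes (k := k)
  have hdiag : allOnes k ⊗ₖ (S + a • 1) + c • 1 =
      Unitary.conjStarAlgAut ℝ _ (⟨_, kronecker_mem_unitary hJ.eigenvectorUnitary.2
        hS.eigenvectorUnitary.2⟩ : unitary (Matrix (k × l) (k × l) ℝ))
        (diagonal fun p : k × l => hJ.eigenvalues p.1 * (hS.eigenvalues p.2 + a) + c) := by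
    rw [← diagonal_kronecker_add_smul_one, map_add, map_smul, map_one, conjStarAlgAut_kronecker,
      map_add, map_smul, map_one, hJ.conjStarAlgAut_diagonal_eigenvalues,
      hS.conjStarAlgAut_diagonal_eigenvalues]
  rw [hdiag, specC_conjStarAlgAut, specC_diagonal]
  push_cast
  rw [Finset.univ_val_map_prod_eq_bind (fun i => (hJ.eigenvalues i : ℂ))
    (fun j => (hS.eigenvalues j : ℂ)) (fun x y => x * (y + a) + c), ← hJ.specC_eq_eigenvalues,
    specC_allOnes, Multiset.cons_bind, hS.specC_eq_eigenvalues]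
  simp [Multiset.bind, Multiset.join, Multiset.nsmul_replicate]

lemma isHermitian_seidelOf {M : Matrix k k ℝ} (hM : M.IsHermitian) : (seidelOf M).IsHermitian :=
  (isHermitian_allOnes.sub isHermitian_one).sub (hM.smul (by simp))

lemma seidelOf_allOnes_kronecker (M : Matrix l l ℝ) :
    seidelOf (allOnes k ⊗ₖ M) = allOnes k ⊗ₖ (seidelOf M + 1) - 1 := by
  ext ⟨i, j⟩ ⟨i', j'⟩
  by_cases hi : i = i' <;> by_cases hj : j = j' <;>
    simp [seidelOf, allOnes, one_apply, hi, hj, two_smul]; ring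

lemma seidelOf_allOnes_kronecker_add_one_sub_one (M : Matrix l l ℝ) :
    seidelOf (allOnes k ⊗ₖ (M + 1) - 1) = allOnes k ⊗ₖ (seidelOf M - 1) + 1 := by
  ext ⟨i, j⟩ ⟨i', j'⟩
  by_cases hi : i = i' <;> by_cases hj : j = j' <;>
    simp [seidelOf, allOnes, one_apply, hi, hj, two_smul]; ring

end

theorem seidel_spectrum_DmstarDm {m n : ℕ} (hm : 1 ≤ m) (G : SimpleGraph (Fin n))
    [DecidableRel G.Adj] :
    specC (seidelOf (allOnes (Fin m) ⊗ₖ ((allOnes (Fin m) ⊗ₖ G.adjMatrix ℝ) + 1) - 1)) =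
      (specC (seidelOf (G.adjMatrix ℝ))).map
          (fun σ => (m : ℂ) ^ 2 * σ + ((m : ℂ) - 1) ^ 2) +
        Multiset.replicate (m * n - n) ((1 : ℂ) - 2 * m) +
        Multiset.replicate (m ^ 2 * n - m * n) (1 : ℂ) := by
  have : NeZero m := ⟨by omega⟩
  have hA := G.isHermitian_adjMatrix ℝ
  have hDm : specC (seidelOf (allOnes (Fin m) ⊗ₖ G.adjMatrix ℝ)) =
      (specC (seidelOf (G.adjMatrix ℝ))).map (fun σ => (m : ℂ) * (σ + 1) - 1) +
        Multiset.replicate ((m - 1) * n) (-1) := by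
    rw [seidelOf_allOnes_kronecker]
    simpa [sub_eq_add_neg] using
      specC_allOnes_kronecker_add_smul_one (k := Fin m) (isHermitian_seidelOf hA) 1 (-1)
  have hDmstar :
      specC (seidelOf (allOnes (Fin m) ⊗ₖ (allOnes (Fin m) ⊗ₖ G.adjMatrix ℝ + 1) - 1)) =
        (specC (seidelOf (allOnes (Fin m) ⊗ₖ G.adjMatrix ℝ))).map
            (fun τ => (m : ℂ) * (τ - 1) + 1) +
        Multiset.replicate ((m - 1) * (m * n)) 1 := by
    rw [seidelOf_allOnes_kronecker_add_one_sub_one]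
    simpa [sub_eq_add_neg] using
      specC_allOnes_kronecker_add_smul_one (k := Fin m)
        (isHermitian_seidelOf ((isHermitian_allOnes (k := Fin m)).kronecker hA)) (-1) 1
  rw [hDmstar, hDm, Multiset.map_add, Multiset.map_map, Multiset.map_replicate, Nat.sub_one_mul,
    Nat.sub_one_mul, ← mul_assoc, ← sq]
  congr 3
  · funext σ
    simp only [Function.comp_apply]
    ring
  · ring
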